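/- Let the confocal ellipse and hyperbola satisfy αa = c², let a ray from F₁=(−c,0) with slope k ∈ (k₁,k₂) ⊂ (k_min,k_max) meet the ellipse at à and the right branch of the hyperbola at B̃. Then the billiard trajectory starting at F₁ toward Ã, reflecting off the ellipse at Ã, passes through F₂=(c,0); reflecting off the line y=0 at F₂ it goes to B̃; and reflecting off the hyperbola at B̃ it continues along the straight line through B̃ and F₁, i.e. the outgoing direction is parallel to the initial direction F₁Ã and its line passes through F₁. -/

import Mathlib

/-!
The legs at `Ã` and at `B̃` are the focal reflection properties of the ellipse and the
hyperbola: a reflection keeps the component of a direction along the tangent and reverses the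
component across it, and both components are explicit on the conics.

Everything else rests on `x₁ x₂ = c²`. When `αa = c²`, the substitution `x ↦ c²/x` turns the
hyperbola's equation restricted to a line through `F₁` into a multiple of the ellipse's
equation restricted to the same line, so `c²/x₂` is the abscissa of a point where that line
meets the ellipse to the right of `F₁`; since `F₁` lies inside the ellipse there is only one
such point, namely `Ã`. Given `x₁ x₂ = c²`, the mirror image in the `x`-axis of the ray
`Ã → F₂` points at `B̃`, and `B̃ − F₁` is a positive multiple of `Ã − F₁` because `B̃` lies on
the ray from `F₁` through `Ã`.
-/

/-- The billiard (specular) reflection of a direction vector `u` across the line through the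
origin with direction `v` in the plane: `r(u) = 2(⟨u,v⟩/⟨v,v⟩)v − u`. -/
noncomputable def reflectDir (v u : ℝ × ℝ) : ℝ × ℝ :=
  (2 * (u.1 * v.1 + u.2 * v.2) / (v.1 ^ 2 + v.2 ^ 2) * v.1 - u.1,
   2 * (u.1 * v.1 + u.2 * v.2) / (v.1 ^ 2 + v.2 ^ 2) * v.2 - u.2)

theorem reflectDir_eq_of_inner_eq_of_cross_eq {v u w : ℝ × ℝ} (hv : v ≠ 0)
    (hinner : w.1 * v.1 + w.2 * v.2 = u.1 * v.1 + u.2 * v.2)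
    (hcross : w.1 * v.2 - w.2 * v.1 = u.2 * v.1 - u.1 * v.2) :
    reflectDir v u = w := by
  have hN : v.1 ^ 2 + v.2 ^ 2 ≠ 0 := by
    contrapose! hv
    rw [sq, sq] at hv
    exact Prod.ext_iff.2 (mul_self_add_mul_self_eq_zero.1 hv)
  ext
  · simp only [reflectDir]
    field_simp
    linear_combination (-v.1) * hinner - v.2 * hcross
  · simp only [reflectDir]
    field_simp
    linear_combination (-v.2) * hinner + v.1 * hcross

theorem ellipse_focal_reflection {a b c x y : ℝ} (hb : b ≠ 0) (hce : c ^ 2 = a ^ 2 - b ^ 2)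
    (h : x ^ 2 / a ^ 2 + y ^ 2 / b ^ 2 = 1) :
    ∃ l > (0 : ℝ), reflectDir (-y / b ^ 2, x / a ^ 2) ((x, y) - (-c, 0))
      = l • ((c, 0) - (x, y)) := by
  have hb2 : 0 < b ^ 2 := by positivity
  have ha : a ≠ 0 := by rintro rfl; nlinarith [sq_nonneg c]
  have hE : b ^ 2 * x ^ 2 + a ^ 2 * y ^ 2 = a ^ 2 * b ^ 2 := by
    field_simp at h; linarith
  have hxa : x ^ 2 ≤ a ^ 2 := by nlinarith [sq_nonneg y, sq_nonneg a]
  have hcx : |c * x| < a ^ 2 := by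
    refine abs_lt_of_sq_lt_sq ?_ (by positivity)
    nlinarith [mul_le_mul_of_nonneg_left hxa (sq_nonneg c), sq_nonneg a]
  obtain ⟨hp, hm⟩ := abs_lt.1 hcx
  -- `(a² ± c x) / a` are the focal distances `|F₁A|` and `|F₂A|`
  refine ⟨(a ^ 2 + c * x) / (a ^ 2 - c * x), div_pos (by linarith) (by linarith), ?_⟩
  apply reflectDir_eq_of_inner_eq_of_cross_eq
  · intro h0
    simp only [Prod.mk_eq_zero, div_eq_zero_iff, neg_eq_zero, hb, ha, pow_eq_zero_iff,
      ne_eq, OfNat.ofNat_ne_zero, not_false_eq_true, or_false] at h0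
    obtain ⟨rfl, rfl⟩ := h0
    nlinarith
  · simp only [Prod.smul_mk, Prod.mk_sub_mk, smul_eq_mul]
    field_simp
    linear_combination (-2 * a ^ 2 * x * y) * hce
  · simp only [Prod.smul_mk, Prod.mk_sub_mk, smul_eq_mul]
    field_simp
    linear_combination (-2 * c * x) * hE

theorem hyperbola_focal_reflection {α β c x y : ℝ} (hβ : β ≠ 0) (hc : 0 < c)
    (hch : c ^ 2 = α ^ 2 + β ^ 2) (h : x ^ 2 / α ^ 2 - y ^ 2 / β ^ 2 = 1) (hx : 0 < x) :
    ∃ l > (0 : ℝ), reflectDir (y / β ^ 2, x / α ^ 2) ((x, y) - (c, 0))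
      = l • ((x, y) - (-c, 0)) := by
  have hβ2 : 0 < β ^ 2 := by positivity
  have hα : α ≠ 0 := by
    rintro rfl
    simp only [ne_eq, OfNat.ofNat_ne_zero, not_false_eq_true, zero_pow, div_zero, zero_sub] at h
    nlinarith [div_nonneg (sq_nonneg y) hβ2.le]
  have hH : β ^ 2 * x ^ 2 - α ^ 2 * y ^ 2 = α ^ 2 * β ^ 2 := by
    field_simp at h; linarith
  have hxα : α ^ 2 ≤ x ^ 2 := by nlinarith [sq_nonneg y, sq_nonneg α]
  have hcx : α ^ 2 < c * x := by
    refine lt_of_pow_lt_pow_left₀ 2 (by positivity) ?_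
    have hα2 : 0 < α ^ 2 := by positivity
    nlinarith [mul_le_mul_of_nonneg_left hxα (sq_nonneg c), mul_pos hβ2 hα2]
  -- `(c x ∓ α²) / α` are the focal distances `|F₂B|` and `|F₁B|`
  refine ⟨(c * x - α ^ 2) / (c * x + α ^ 2), div_pos (by linarith) (by positivity), ?_⟩
  apply reflectDir_eq_of_inner_eq_of_cross_eq
  · intro h0
    simp only [Prod.mk_eq_zero, div_eq_zero_iff, hβ, hα, pow_eq_zero_iff,
      ne_eq, OfNat.ofNat_ne_zero, not_false_eq_true, or_false] at h0
    obtain ⟨rfl, rfl⟩ := h0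
    nlinarith
  · simp only [Prod.smul_mk, Prod.mk_sub_mk, smul_eq_mul]
    field_simp
    linear_combination (2 * x * α ^ 2 * y) * hch
  · simp only [Prod.smul_mk, Prod.mk_sub_mk, smul_eq_mul]
    field_simp
    linear_combination (2 * c * x) * hH

theorem eq_of_quadratic_eq_zero_of_lt {p r q m x y : ℝ} (hp : 0 ≤ p)
    (hm : p * m ^ 2 + r * m + q < 0) (hx : m < x) (hy : m < y)
    (hx0 : p * x ^ 2 + r * x + q = 0) (hy0 : p * y ^ 2 + r * y + q = 0) : x = y := by
  have hslope : 0 < p * (x + m) + r := by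
    refine pos_of_mul_pos_right (a := x - m) ?_ (sub_pos.2 hx).le
    nlinarith
  have hfactor : (x - y) * (p * (x + y) + r) = 0 := by linear_combination hx0 - hy0
  have hne : p * (x + y) + r ≠ 0 := by nlinarith
  exact sub_eq_zero.1 ((mul_eq_zero.1 hfactor).resolve_right hne)

theorem ellipse_focal_ray_unique {a b c k x x' : ℝ} (hb : b ≠ 0) (hce : c ^ 2 = a ^ 2 - b ^ 2)
    (hx : x ^ 2 / a ^ 2 + (k * (x + c)) ^ 2 / b ^ 2 = 1)
    (hx' : x' ^ 2 / a ^ 2 + (k * (x' + c)) ^ 2 / b ^ 2 = 1)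
    (hlt : -c < x) (hlt' : -c < x') : x = x' := by
  have ha : a ≠ 0 := by rintro rfl; nlinarith [sq_nonneg c, sq_pos_of_ne_zero hb]
  field_simp at hx hx'
  refine eq_of_quadratic_eq_zero_of_lt (p := b ^ 2 + a ^ 2 * k ^ 2) (r := 2 * a ^ 2 * k ^ 2 * c)
    (q := a ^ 2 * k ^ 2 * c ^ 2 - a ^ 2 * b ^ 2) (by positivity) ?_ hlt hlt' ?_ ?_
  · nlinarith [pow_pos (sq_pos_of_ne_zero hb) 2]
  · linear_combination hx
  · linear_combination hx'

theorem ellipse_inv_of_hyperbola_focal_ray {a b α β c k x : ℝ} (hb : b ≠ 0) (hc : c ≠ 0)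
    (hce : c ^ 2 = a ^ 2 - b ^ 2) (hch : c ^ 2 = α ^ 2 + β ^ 2) (hαa : α * a = c ^ 2)
    (hx : x ≠ 0) (h : x ^ 2 / α ^ 2 - (k * (x + c)) ^ 2 / β ^ 2 = 1) :
    (c ^ 2 / x) ^ 2 / a ^ 2 + (k * (c ^ 2 / x + c)) ^ 2 / b ^ 2 = 1 := by
  have ha : a ≠ 0 := by rintro rfl; exact hc (by simpa using hαa.symm)
  have hα : α ≠ 0 := by rintro rfl; exact hc (by simpa using hαa.symm)
  have hβa : β ^ 2 * a ^ 2 = c ^ 2 * b ^ 2 := by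
    linear_combination (-(α * a + c ^ 2)) * hαa + (-(a ^ 2)) * hch + (-(c ^ 2)) * hce
  have hβ : β ≠ 0 := by
    rintro rfl
    simp [hb, hc] at hβa
  have hαa2 : α ^ 2 * a ^ 2 = c ^ 4 := by linear_combination (α * a + c ^ 2) * hαa
  field_simp at h
  have hG :
      c ^ 2 * (b ^ 2 * c ^ 4 + a ^ 2 * k ^ 2 * c ^ 2 * (x + c) ^ 2 - a ^ 2 * b ^ 2 * x ^ 2) = 0 := by
    linear_combination (-a ^ 4) * h + (a ^ 2 * x ^ 2 - α ^ 2 * a ^ 2) * hβa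
      - (a ^ 2 * k ^ 2 * (x + c) ^ 2 + c ^ 2 * b ^ 2) * hαa2
  field_simp
  linear_combination (mul_eq_zero.1 hG).resolve_left (pow_ne_zero 2 hc)

theorem reflectDir_xAxis_inv_focal_ray {c k x : ℝ} (hx : x ≠ 0) :
    reflectDir (1, 0) ((c, 0) - (c ^ 2 / x, k * (c ^ 2 / x + c)))
      = (c / x) • ((x, k * (x + c)) - (c, 0)) := by
  simp only [reflectDir, Prod.mk_sub_mk, Prod.smul_mk, smul_eq_mul, Prod.mk.injEq]
  constructor <;> field_simp <;> ring

theorem billiard_trajectory_returns_general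
    (a b α β c κ k k₁ x₁ y₁ x₂ y₂ : ℝ)
    (hb : 0 < b) (hα : 0 < α) (hβ : 0 < β) (hc : 0 < c)
    (hce : c ^ 2 = a ^ 2 - b ^ 2) (hch : c ^ 2 = α ^ 2 + β ^ 2)
    (hαa : α * a = c ^ 2) (hκ1 : 1 < κ) (hκ2 : κ < 2)
    (hkmin : (κ - 1) * Real.sqrt (4 - (κ - 1) ^ 2) / (2 - (κ - 1) ^ 2) < k₁)
    (hk₁ : k₁ < k)
    (hAe : x₁ ^ 2 / a ^ 2 + y₁ ^ 2 / b ^ 2 = 1)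
    (hAr : y₁ = k * (x₁ + c)) (hAy : 0 < y₁)
    (hBh : x₂ ^ 2 / α ^ 2 - y₂ ^ 2 / β ^ 2 = 1)
    (hBr : y₂ = k * (x₂ + c)) (hBx : α ≤ x₂) :
    (∃ l₁ > (0 : ℝ),
        reflectDir (-y₁ / b ^ 2, x₁ / a ^ 2) ((x₁, y₁) - (-c, 0))
          = l₁ • ((c, (0 : ℝ)) - (x₁, y₁))) ∧
    (∃ l₂ > (0 : ℝ),
        reflectDir (1, 0) ((c, (0 : ℝ)) - (x₁, y₁)) = l₂ • ((x₂, y₂) - (c, 0))) ∧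
    (∃ l₃ > (0 : ℝ),
        reflectDir (y₂ / β ^ 2, x₂ / α ^ 2) ((x₂, y₂) - (c, 0))
          = l₃ • ((x₂, y₂) - (-c, 0))) ∧
    (∃ μ > (0 : ℝ), (x₂, y₂) - (-c, (0 : ℝ)) = μ • ((x₁, y₁) - (-c, 0))) := by
  have hk : 0 < k := by
    have hkmin_nonneg : 0 ≤ (κ - 1) * Real.sqrt (4 - (κ - 1) ^ 2) / (2 - (κ - 1) ^ 2) :=
      div_nonneg (mul_nonneg (by linarith) (Real.sqrt_nonneg _)) (by nlinarith)
    linarith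
  have hx₂ : 0 < x₂ := hα.trans_le hBx
  have hx₁c : 0 < x₁ + c := pos_of_mul_pos_right (hAr ▸ hAy) hk.le
  have hx₁ : x₁ = c ^ 2 / x₂ :=
    ellipse_focal_ray_unique hb.ne' hce (hAr ▸ hAe)
      (ellipse_inv_of_hyperbola_focal_ray hb.ne' hc.ne' hce hch hαa hx₂.ne' (hBr ▸ hBh))
      (by linarith) (by linarith [div_pos (pow_pos hc 2) hx₂])
  refine ⟨ellipse_focal_reflection hb.ne' hce hAe, ⟨c / x₂, div_pos hc hx₂, ?_⟩,
    hyperbola_focal_reflection hβ.ne' hc hch hBh hx₂, ⟨(x₂ + c) / (x₁ + c), by positivity, ?_⟩⟩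
  · subst hAr hBr hx₁
    exact reflectDir_xAxis_inv_focal_ray hx₂.ne'
  · subst hAr hBr
    ext <;> simp only [Prod.fst_sub, Prod.snd_sub, Prod.smul_fst, Prod.smul_snd, smul_eq_mul] <;>
      field_simp <;> ring

/-- Let the confocal ellipse `x²/a² + y²/b² = 1` and hyperbola `x²/α² − y²/β² = 1` have foci
`F₁ = (−c,0)`, `F₂ = (c,0)` and satisfy `αa = c²`, `κ = a/c ∈ (1,2)`. Let a ray from `F₁`
with slope `k ∈ (k₁, k₂) ⊂ (k_min, k_max)` meet the ellipse at `Ã = (x₁,y₁)` and the right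
branch of the hyperbola at `B̃ = (x₂,y₂)`. Then the billiard trajectory from `F₁` toward
`Ã`, after reflecting off the ellipse at `Ã` (in the tangent direction `(−y₁/b², x₁/a²)`),
heads to `F₂`; after reflecting off the line `y = 0` at `F₂` it heads to `B̃`; after
reflecting off the hyperbola at `B̃` (tangent direction `(y₂/β², x₂/α²)`) it moves in the
direction `B̃ − F₁`, whose line passes through `F₁` and which is parallel (with positive
ratio) to the initial direction `Ã − F₁`. -/
theorem billiard_trajectory_returns
    (a b α β c κ k k₁ k₂ x₁ y₁ x₂ y₂ : ℝ)
    (hb : 0 < b) (hab : b < a) (hα : 0 < α) (hβ : 0 < β) (hc : 0 < c)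
    (hce : c ^ 2 = a ^ 2 - b ^ 2) (hch : c ^ 2 = α ^ 2 + β ^ 2)
    (hαa : α * a = c ^ 2) (hκ : κ = a / c) (hκ1 : 1 < κ) (hκ2 : κ < 2)
    (hkmin : (κ - 1) * Real.sqrt (4 - (κ - 1) ^ 2) / (2 - (κ - 1) ^ 2) < k₁)
    (hk₁ : k₁ < k) (hk₂ : k < k₂) (hkmax : k₂ < Real.sqrt (κ ^ 2 - 1))
    (hAe : x₁ ^ 2 / a ^ 2 + y₁ ^ 2 / b ^ 2 = 1)
    (hAr : y₁ = k * (x₁ + c)) (hAy : 0 < y₁)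
    (hBh : x₂ ^ 2 / α ^ 2 - y₂ ^ 2 / β ^ 2 = 1)
    (hBr : y₂ = k * (x₂ + c)) (hBx : α ≤ x₂) :
    (∃ l₁ > (0 : ℝ),
        reflectDir (-y₁ / b ^ 2, x₁ / a ^ 2) ((x₁, y₁) - (-c, 0))
          = l₁ • ((c, (0 : ℝ)) - (x₁, y₁))) ∧
    (∃ l₂ > (0 : ℝ),
        reflectDir (1, 0) ((c, (0 : ℝ)) - (x₁, y₁)) = l₂ • ((x₂, y₂) - (c, 0))) ∧
    (∃ l₃ > (0 : ℝ),
        reflectDir (y₂ / β ^ 2, x₂ / α ^ 2) ((x₂, y₂) - (c, 0))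
          = l₃ • ((x₂, y₂) - (-c, 0))) ∧
    (∃ μ > (0 : ℝ), (x₂, y₂) - (-c, (0 : ℝ)) = μ • ((x₁, y₁) - (-c, 0))) :=
  billiard_trajectory_returns_general a b α β c κ k k₁ x₁ y₁ x₂ y₂ hb hα hβ hc hce hch hαa hκ1 hκ2
    hkmin hk₁ hAe hAr hAy hBh hBr hBx
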